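/- arXiv:1705.10658 — 2 statements merged into one kernel-verified Lean document; each statement's English description precedes it below -/
import Mathlib

section
/- Let Q ∈ K⟦x⟧[y] be such that Q|x=0 ≠ 0, let c ∈ K be a root of Q|x=0 of multiplicity m ≥ 1, let s = val_x(Q(c + x·y)), and let Q_c = Q(c + x·y)/x^s. Then deg((Q_c)|x=0) ≤ s ≤ m. -/
open Polynomial PowerSeries

/-- `Q|_{x=0}` : set `x = 0` in every coefficient. -/
noncomputable def atZero {K : Type*} [Field K] (Q : Polynomial (PowerSeries K)) : Polynomial K :=
  Q.map (PowerSeries.constantCoeff (R := K))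

/-- `Q(f + x^t y)` : substitute `f + x^t·y` for `y`. -/
noncomputable def shift {K : Type*} [Field K] (Q : Polynomial (PowerSeries K))
    (f : PowerSeries K) (t : ℕ) : Polynomial (PowerSeries K) :=
  Q.comp (Polynomial.C f + Polynomial.C ((PowerSeries.X : PowerSeries K) ^ t) * Polynomial.X)

/-- `roots(Q, d)`: all of `K⟦x⟧` if `d ≤ 0`, else `{f | Q(f) ≡ 0 mod x^d}`. -/
def seriesRoots {K : Type*} [Field K] (Q : Polynomial (PowerSeries K)) (d : ℤ) :
    Set (PowerSeries K) :=
  {f | 0 < d → (PowerSeries.X : PowerSeries K) ^ d.toNat ∣ Polynomial.eval f Q}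

/-- `(F i)ᵢ` is a basic root set of `Q` to precision `d`. -/
def IsBasicRootSet {K : Type*} [Field K] (Q : Polynomial (PowerSeries K)) (d : ℤ)
    {ι : Type} [Fintype ι] (F : ι → Polynomial K × ℕ) : Prop :=
  if 0 < d then
    (∀ i, Polynomial.C ((PowerSeries.X : PowerSeries K) ^ d.toNat) ∣
        shift Q (((F i).1 : Polynomial K) : PowerSeries K) (F i).2) ∧
    seriesRoots Q d =
      ⋃ i, {g | ∃ h : PowerSeries K,
        g = (((F i).1 : Polynomial K) : PowerSeries K) + (PowerSeries.X : PowerSeries K) ^ (F i).2 * h}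
  else Set.range F = {(0, 0)}

/-- the root multiplicity of `(f, t)` in `Q` is `m`. -/
def HasRootMultiplicity {K : Type*} [Field K] (Q : Polynomial (PowerSeries K))
    (f : Polynomial K) (t : ℕ) (m : ℕ) : Prop :=
  ∃ (g : Polynomial K) (c : K) (s : ℕ) (R : Polynomial (PowerSeries K)),
    f = g + Polynomial.C c * Polynomial.X ^ (t - 1) ∧
    g.degree < ((t - 1 : ℕ) : WithBot ℕ) ∧
    shift Q ((g : Polynomial K) : PowerSeries K) (t - 1)
      = Polynomial.C ((PowerSeries.X : PowerSeries K) ^ s) * R ∧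
    atZero R ≠ 0 ∧
    m = (atZero R).rootMultiplicity c

/-- `(F i)ᵢ` is a reduced root set of `Q` to precision `d`. -/
def IsReducedRootSet {K : Type*} [Field K] (Q : Polynomial (PowerSeries K)) (d : ℤ)
    {ι : Type} [Fintype ι] (F : ι → Polynomial K × ℕ) : Prop :=
  IsBasicRootSet Q d F ∧
  (0 < d → ∃ m : ι → ℕ,
    (∀ i, (F i).1 ≠ 0) ∧
    (∀ i, HasRootMultiplicity Q (F i).1 (F i).2 (m i)) ∧
    (∀ i, 1 ≤ m i) ∧
    (∀ i (s : ℕ) (Qi : Polynomial (PowerSeries K)),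
      shift Q (((F i).1 : Polynomial K) : PowerSeries K) (F i).2
        = Polynomial.C ((PowerSeries.X : PowerSeries K) ^ s) * Qi →
      atZero Qi ≠ 0 → (atZero Qi).natDegree ≤ m i) ∧
    (∑ i, m i) ≤ (atZero Q).natDegree)


/-!
Write `T = Q(c + y)`, the Taylor expansion of `Q` at `c`. Then `Q(c + x·y) = T(x·y)`, so comparing
coefficients of `yʲ` gives `xʲ · Tⱼ = xˢ · (Q_c)ⱼ` for every `j`. For `j > s` the right-hand side
forces `(Q_c)ⱼ(0) = 0`, which bounds the degree of `(Q_c)|x=0` by `s`. For `j = m` the left-hand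
side has valuation exactly `m`, because `T|x=0` is the Taylor expansion of `Q|x=0` at `c` and its
lowest nonzero coefficient sits in degree `m`; hence `s ≤ m`.
-/

theorem PowerSeries.constantCoeff_eq_zero_of_X_pow_mul_eq {R : Type*} [Semiring R]
    {a b : R⟦X⟧} {j s : ℕ} (h : X ^ j * a = X ^ s * b) (hsj : s < j) :
    constantCoeff b = 0 := by
  have hs := congrArg (coeff s) h
  rwa [coeff_X_pow_mul', coeff_X_pow_mul', if_neg (not_le.mpr hsj), if_pos le_rfl,
    Nat.sub_self, coeff_zero_eq_constantCoeff_apply, eq_comm] at hs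

theorem Polynomial.coeff_taylor_rootMultiplicity_ne_zero {R : Type*} [CommRing R]
    {p : R[X]} (hp : p ≠ 0) (t : R) :
    (taylor t p).coeff (p.rootMultiplicity t) ≠ 0 := by
  rw [rootMultiplicity_eq_natTrailingDegree, ← taylor_apply]
  exact trailingCoeff_nonzero_iff_nonzero.mpr (by rwa [Ne, taylor_eq_zero])

section Shift

variable {K : Type*} [Field K]

theorem coeff_atZero (Q : (K⟦X⟧)[X]) (j : ℕ) :
    (atZero Q).coeff j = constantCoeff (Q.coeff j) :=
  Polynomial.coeff_map _ j

theorem atZero_taylor_C (Q : (K⟦X⟧)[X]) (c : K) :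
    atZero (taylor (PowerSeries.C c) Q) = taylor c (atZero Q) := by
  simp [atZero, map_taylor]

theorem shift_one_eq_taylor_comp (Q : (K⟦X⟧)[X]) (a : K⟦X⟧) :
    shift Q a 1 = (taylor a Q).comp (Polynomial.C PowerSeries.X * Polynomial.X) := by
  rw [shift, taylor_apply, comp_assoc, add_comp, X_comp, C_comp, pow_one, add_comm]

theorem X_pow_mul_coeff_taylor_eq {Q Qc : (K⟦X⟧)[X]} {a : K⟦X⟧} {s : ℕ}
    (h : shift Q a 1 = Polynomial.C (PowerSeries.X ^ s) * Qc) (j : ℕ) :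
    PowerSeries.X ^ j * (taylor a Q).coeff j = PowerSeries.X ^ s * Qc.coeff j := by
  have hj := congrArg (Polynomial.coeff · j) h
  simp only [shift_one_eq_taylor_comp, comp_C_mul_X_coeff, Polynomial.coeff_C_mul] at hj
  rw [mul_comm, hj]

end Shift

theorem degree_shift_le_multiplicity_general {K : Type*} [Field K]
    (Q : Polynomial (PowerSeries K)) (h0 : atZero Q ≠ 0)
    (c : K) (m : ℕ) (hm : (atZero Q).rootMultiplicity c = m)
    (s : ℕ) (Qc : Polynomial (PowerSeries K))
    (hshift : shift Q (PowerSeries.C (R := K) c) 1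
      = Polynomial.C ((PowerSeries.X : PowerSeries K) ^ s) * Qc) :
    (atZero Qc).natDegree ≤ s ∧ s ≤ m := by
  have hcoeff := X_pow_mul_coeff_taylor_eq hshift
  have hTm : constantCoeff ((taylor (PowerSeries.C c) Q).coeff m) ≠ 0 := by
    have := coeff_taylor_rootMultiplicity_ne_zero h0 c
    rwa [hm, ← atZero_taylor_C, coeff_atZero] at this
  refine ⟨natDegree_le_iff_coeff_eq_zero.mpr fun j hj => ?_, not_lt.mp fun hms => ?_⟩
  · rw [coeff_atZero]
    exact constantCoeff_eq_zero_of_X_pow_mul_eq (hcoeff j) hj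
  · exact hTm (constantCoeff_eq_zero_of_X_pow_mul_eq (hcoeff m).symm hms)

/-- if `c` is a root of `Q|x=0` of multiplicity `m ≥ 1`,
`s = val_x(Q(c + x·y))` and `Q_c = Q(c + x·y)/x^s`, then `deg((Q_c)|x=0) ≤ s ≤ m`. -/
theorem degree_shift_le_multiplicity {K : Type*} [Field K]
    (Q : Polynomial (PowerSeries K)) (h0 : atZero Q ≠ 0)
    (c : K) (m : ℕ) (hm : (atZero Q).rootMultiplicity c = m) (hm1 : 1 ≤ m)
    (s : ℕ) (Qc : Polynomial (PowerSeries K))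
    (hshift : shift Q (PowerSeries.C (R := K) c) 1
      = Polynomial.C ((PowerSeries.X : PowerSeries K) ^ s) * Qc)
    (hval : atZero Qc ≠ 0) :
    (atZero Qc).natDegree ≤ s ∧ s ≤ m :=
  degree_shift_le_multiplicity_general Q h0 c m hm s Qc hshift
end

section
/- For Q ∈ K⟦x⟧[y] and c ∈ K, every coefficient (in K⟦x⟧) of y^β in the polynomial Q(c + x·y) is divisible by x^β. Moreover, if Q|x=0 ≠ 0 and c is a root of Q|x=0 of multiplicity exactly m, then the coefficient of y^m in Q(c + x·y) has x-valuation exactly m. -/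
open Polynomial PowerSeries

/-!
Writing `Q(c + x·y) = (taylor c Q)(x·y)`, the coefficient of `y^β` is `x^β` times the `β`-th
Taylor coefficient of `Q` at `c`. Setting `x = 0` in that Taylor coefficient gives the `β`-th
Taylor coefficient of `Q|x=0` at `c`, and for `β` the multiplicity of `c` this is the trailing
coefficient of `Q|x=0 (y + c)`, hence nonzero.
-/

namespace Polynomial

theorem coeff_comp_C_add_C_mul_X {R : Type*} [CommSemiring R] (f : R[X]) (a b : R) (n : ℕ) :
    (f.comp (C a + C b * X)).coeff n = (taylor a f).coeff n * b ^ n := by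
  rw [← comp_C_mul_X_coeff, taylor_apply, comp_assoc, add_comp, X_comp, C_comp, add_comm]

theorem coeff_taylor_rootMultiplicity_ne_zero_s5 {R : Type*} [CommRing R] {p : R[X]} (hp : p ≠ 0)
    (t : R) : (taylor t p).coeff (p.rootMultiplicity t) ≠ 0 := by
  rw [rootMultiplicity_eq_natTrailingDegree, ← taylor_apply]
  exact trailingCoeff_nonzero_iff_nonzero.mpr ((taylor_eq_zero t p).not.mpr hp)

end Polynomial

theorem coeff_shift {K : Type*} [Field K] (Q : Polynomial (PowerSeries K)) (f : PowerSeries K)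
    (t n : ℕ) : (shift Q f t).coeff n = (taylor f Q).coeff n * (PowerSeries.X ^ t) ^ n :=
  coeff_comp_C_add_C_mul_X Q f _ n

theorem constantCoeff_coeff_taylor_C {K : Type*} [Field K] (Q : Polynomial (PowerSeries K))
    (c : K) (n : ℕ) :
    PowerSeries.constantCoeff ((taylor (PowerSeries.C c) Q).coeff n)
      = (taylor c (atZero Q)).coeff n := by
  rw [atZero, ← Polynomial.coeff_map, map_taylor, PowerSeries.constantCoeff_C]

/-- every coefficient of `y^β` in `Q(c + x·y)` is divisible by `x^β`;
moreover if `Q|x=0 ≠ 0` and `c` is a root of `Q|x=0` of multiplicity exactly `m`, then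
the coefficient of `y^m` in `Q(c + x·y)` has `x`-valuation exactly `m`. -/
theorem coeff_shift_valuation {K : Type*} [Field K]
    (Q : Polynomial (PowerSeries K)) (c : K) :
    (∀ β : ℕ, (PowerSeries.X : PowerSeries K) ^ β ∣ (shift Q (PowerSeries.C (R := K) c) 1).coeff β) ∧
    (atZero Q ≠ 0 → (atZero Q).IsRoot c → ∀ m : ℕ, (atZero Q).rootMultiplicity c = m →
      (PowerSeries.X : PowerSeries K) ^ m ∣ (shift Q (PowerSeries.C (R := K) c) 1).coeff m ∧
      ¬ (PowerSeries.X : PowerSeries K) ^ (m + 1) ∣ (shift Q (PowerSeries.C (R := K) c) 1).coeff m) := by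
  have x_pow_dvd (β : ℕ) :
      (PowerSeries.X : PowerSeries K) ^ β ∣ (shift Q (PowerSeries.C c) 1).coeff β := by
    rw [coeff_shift, pow_one]
    exact dvd_mul_left _ _
  refine ⟨x_pow_dvd, fun hQ _ m hm => ⟨x_pow_dvd m, ?_⟩⟩
  rw [coeff_shift, pow_one, pow_succ', mul_dvd_mul_iff_right (pow_ne_zero m PowerSeries.X_ne_zero),
    PowerSeries.X_dvd_iff, constantCoeff_coeff_taylor_C, ← hm]
  exact coeff_taylor_rootMultiplicity_ne_zero_s5 hQ c
end
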